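/- If the complement D^c = Z^d \ D of the set of dissipative sites is finite, then the expected survival time of the killed random walk is finite for every starting point: Ê_x(T̂) < ∞ for all x ∈ Z^d. -/

import Mathlib

open MeasureTheory ProbabilityTheory
open scoped ENNReal

/-- The `j`-th unit step in `ℤ^d`: for `j < d` it is `+e_j`, and for `d ≤ j < 2d` it is
`-e_{j-d}`.  When `j` is uniform on `{0, …, 2d-1}`, this is a uniformly chosen nearest-neighbour
step. -/
def dirVec (d : ℕ) (j : ℕ) : Fin d → ℤ := fun i =>
  if j < d then (if (i : ℕ) = j then 1 else 0) else (if (i : ℕ) + d = j then -1 else 0)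

/-- The simple random walk on `ℤ^d` started at `x`, driven by the seed sequence `u`: at step `n`
it moves by `dirVec d (u n)`.  When the seeds are i.i.d. uniform on `{0, …, 2d-1}`, this is the
discrete-time simple random walk. -/
def srw (d : ℕ) (x : Fin d → ℤ) (u : ℕ → ℕ) : ℕ → Fin d → ℤ
  | 0 => x
  | n + 1 => srw d x u n + dirVec d (u n)

/-- The local time `l_k(z)`: the number of visits to `z` strictly before time `k`. -/
def locTime (d : ℕ) (x : Fin d → ℤ) (u : ℕ → ℕ) (k : ℕ) (z : Fin d → ℤ) : ℕ :=
  ((Finset.range k).filter (fun j => srw d x u j = z)).card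

open Classical in
/-- The product `∏_{z ∈ D} (2d/(2d+1))^{l_k(z)}`, valued in `[0,∞]`; since `l_k(z) = 0` for all
but finitely many `z`, it is the corresponding finite product over the sites of `D` visited
strictly before time `k`. -/
noncomputable def prodD (d : ℕ) (D : Set (Fin d → ℤ)) (x : Fin d → ℤ) (u : ℕ → ℕ)
    (k : ℕ) : ℝ≥0∞ :=
  ∏ z ∈ ((Finset.range k).image (fun j => srw d x u j)).filter (fun z => z ∈ D),
    (((2 * d : ℕ) : ℝ≥0∞) / ((2 * d + 1 : ℕ) : ℝ≥0∞)) ^ (locTime d x u k z)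

open Classical in
/-- The killed random walk associated to the set `D` of dissipative sites, started at `x` and
driven by the seed sequence `w`; `none` is the cemetery state.  From a site not in `D` it moves
by the uniform step `w n % (2d)`; from a site in `D`, with `r = w n % (2d+1)` it is killed if
`r = 2d` and otherwise moves by step `r`.  When the seeds are i.i.d. uniform on
`{0, …, 2d(2d+1) - 1}`, from a site in `D` the walk moves to each neighbour with probability
`1/(2d+1)` and is killed with probability `1/(2d+1)`, and from a site not in `D` it moves to each
neighbour with probability `1/(2d)`. -/
noncomputable def kwalk (d : ℕ) (D : Set (Fin d → ℤ)) (x : Fin d → ℤ) (w : ℕ → ℕ) :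
    ℕ → Option (Fin d → ℤ)
  | 0 => some x
  | n + 1 =>
    match kwalk d D x w n with
    | none => none
    | some y =>
      if y ∈ D then
        (if w n % (2 * d + 1) = 2 * d then none
         else some (y + dirVec d (w n % (2 * d + 1))))
      else some (y + dirVec d (w n % (2 * d)))

/-- The survival time `T̂` of the killed random walk: the step at which it is killed, as an
element of `[0,∞]` (it equals `∞` if the walk is never killed). -/
noncomputable def killTime (d : ℕ) (D : Set (Fin d → ℤ)) (x : Fin d → ℤ) (w : ℕ → ℕ) : ℝ≥0∞ :=
  sInf {t : ℝ≥0∞ | ∃ k : ℕ, t = (k : ℝ≥0∞) ∧ kwalk d D x w k = none}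

/-- The hitting (return) time `τ(D) = inf {k ≥ 1 : X_k ∈ D}` of the set `D` by the simple random
walk, as an element of `[0,∞]` (it equals `∞` if `D` is never hit at a positive time). -/
noncomputable def retTime (d : ℕ) (D : Set (Fin d → ℤ)) (x : Fin d → ℤ) (u : ℕ → ℕ) : ℝ≥0∞ :=
  sInf {t : ℝ≥0∞ | ∃ k : ℕ, t = (k : ℝ≥0∞) ∧ 1 ≤ k ∧ srw d x u k ∈ D}


/-!
Inside `D` the walk is killed with probability `1/(2d+1)` at each step. From any position `y`,
walking in direction `e₀` enters `D` within `#Dᶜ` steps, so some seed word of length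
`N = #Dᶜ + 1` (`e₀`-steps, then the killing seed) kills the walk started from `y`. Whatever
happened before, the next `N` seeds spell that word with probability `p ^ N`, `p` being the
probability of a single seed value; hence `P(T̂ > t + N) ≤ (1 - p ^ N) P(T̂ > t)`, and
`Ê_x T̂ = ∑ₜ P(T̂ > t) ≤ N / p ^ N`.
-/

lemma ENNReal.le_pow_div_of_le_mul {f : ℕ → ℝ≥0∞} (hf : Antitone f) (h0 : f 0 ≤ 1) {N : ℕ}
    {r : ℝ≥0∞} (h : ∀ t, f (t + N) ≤ r * f t) (m : ℕ) : f m ≤ r ^ (m / N) := by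
  have hk : ∀ k, f (N * k) ≤ r ^ k := by
    intro k
    induction k with
    | zero => simpa using h0
    | succ k ih =>
      calc f (N * (k + 1)) = f (N * k + N) := by rw [Nat.mul_succ]
        _ ≤ r * r ^ k := (h _).trans (by gcongr)
        _ = r ^ (k + 1) := (pow_succ' r k).symm
  exact (hf (Nat.mul_div_le m N)).trans (hk _)

lemma ENNReal.tsum_pow_div (r : ℝ≥0∞) (N : ℕ) [NeZero N] :
    ∑' m, r ^ (m / N) = N * (1 - r)⁻¹ := by
  calc ∑' m, r ^ (m / N) = ∑' z : ℕ × Fin N, r ^ z.1 :=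
        (Nat.divModEquiv N).tsum_eq fun z => r ^ z.1
    _ = ∑' k, N * r ^ k := by
        rw [ENNReal.tsum_prod (f := fun k (_ : Fin N) => r ^ k)]; simp
    _ = N * (1 - r)⁻¹ := by rw [ENNReal.tsum_mul_left, ENNReal.tsum_geometric]

lemma lintegral_le_tsum_measure {Ω : Type*} [MeasurableSpace Ω] {μ : Measure Ω}
    {f : Ω → ℝ≥0∞} {A : ℕ → Set Ω} (h : ∀ ω, f ω ≤ ∑' m, (A m).indicator 1 ω) :
    ∫⁻ ω, f ω ∂μ ≤ ∑' m, μ (A m) := by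
  -- measurable hulls have the same measure, so no measurability of `A m` is needed
  calc ∫⁻ ω, f ω ∂μ ≤ ∫⁻ ω, ∑' m, (toMeasurable μ (A m)).indicator 1 ω ∂μ :=
        lintegral_mono fun ω => (h ω).trans
          (ENNReal.tsum_le_tsum fun m => Set.indicator_le_indicator_of_subset
            (subset_toMeasurable μ _) (fun _ => zero_le) ω)
    _ = ∑' m, μ (A m) := by
        rw [lintegral_tsum fun m =>
          (measurable_one.indicator (measurableSet_toMeasurable μ _)).aemeasurable]
        simp [lintegral_indicator_one (measurableSet_toMeasurable μ _), measure_toMeasurable]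

section SeedCylinders

lemma setOf_forall_lt_eq_biInter {Ω α : Type*} (W : ℕ → Ω → α) (t : ℕ) (u : ℕ → α) :
    {ω | ∀ j < t, W j ω = u j} = ⋂ j ∈ Finset.range t, W j ⁻¹' {u j} := by
  ext; simp

variable {Ω α : Type*} [MeasurableSpace Ω] [MeasurableSpace α] [MeasurableSingletonClass α]
  {P : Measure Ω} {W : ℕ → Ω → α} {p : ℝ≥0∞}

lemma measurableSet_cylinder (hW : ∀ n, Measurable (W n)) (t : ℕ) (u : ℕ → α) :
    MeasurableSet {ω | ∀ j < t, W j ω = u j} := by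
  rw [setOf_forall_lt_eq_biInter]
  exact Finset.measurableSet_biInter _ fun j _ => hW j (measurableSet_singleton _)

lemma measure_cylinder (hind : iIndepFun W P) (hunif : ∀ n a, P {ω | W n ω = a} = p)
    (t : ℕ) (u : ℕ → α) : P {ω | ∀ j < t, W j ω = u j} = p ^ t := by
  rw [setOf_forall_lt_eq_biInter,
    hind.meas_biInter fun j _ => ⟨{u j}, measurableSet_singleton _, rfl⟩]
  simp [Set.preimage, hunif]

lemma measure_eq_sum_prefix_inter [Fintype α] (hW : ∀ n, Measurable (W n)) (t : ℕ) (A : Set Ω) :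
    P A = ∑ v : Fin t → α, P ((fun ω (j : Fin t) => W j ω) ⁻¹' {v} ∩ A) := by
  have hπ : ∀ v : Fin t → α, MeasurableSet ((fun ω (j : Fin t) => W j ω) ⁻¹' {v}) := fun v =>
    measurable_pi_lambda _ (fun j : Fin t => hW j) (measurableSet_singleton v)
  simp only [← Measure.restrict_apply (hπ _),
    sum_measure_preimage_singleton Finset.univ fun v _ => hπ v]
  simp

theorem measure_survive_add_le [Fintype α] [IsFiniteMeasure P] (hW : ∀ n, Measurable (W n))
    (hind : iIndepFun W P) (hunif : ∀ n a, P {ω | W n ω = a} = p) {N : ℕ} (S : (ℕ → α) → ℕ → Prop)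
    (hdet : ∀ (u u' : ℕ → α) t, (∀ j < t, u j = u' j) → S u t → S u' t)
    (hmono : ∀ (u : ℕ → α) t, S u (t + N) → S u t)
    (hexit : ∀ (u : ℕ → α) t, ∃ u' : ℕ → α, (∀ j < t, u' j = u j) ∧ ¬ S u' (t + N)) (t : ℕ) :
    P {ω | S (fun n => W n ω) (t + N)} ≤ (1 - p ^ N) * P {ω | S (fun n => W n ω) t} := by
  classical
  rw [measure_eq_sum_prefix_inter hW t, measure_eq_sum_prefix_inter hW t, Finset.mul_sum]
  set E : ℕ → Set Ω := fun s => {ω | S (fun n => W n ω) s}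
  set π : Ω → (Fin t → α) := fun ω j => W j ω
  show ∑ v, P (π ⁻¹' {v} ∩ E (t + N)) ≤ ∑ v, (1 - p ^ N) * P (π ⁻¹' {v} ∩ E t)
  refine Finset.sum_le_sum fun v _ => ?_
  by_cases hv : ∃ ω₀ ∈ π ⁻¹' {v}, ω₀ ∈ E t
  · obtain ⟨ω₀, hω₀, hω₀E⟩ := hv
    have hfib : π ⁻¹' {v} = {ω | ∀ j < t, W j ω = W j ω₀} := by
      ext ω
      simp only [Set.mem_preimage, Set.mem_singleton_iff] at hω₀ ⊢
      simp [← hω₀, π, funext_iff, Fin.forall_iff]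
    have hfibE : π ⁻¹' {v} ⊆ E t := by
      rw [hfib]
      exact fun ω hω => hdet _ _ _ (fun j hj => (hω j hj).symm) hω₀E
    obtain ⟨u', hu't, hu'⟩ := hexit (fun n => W n ω₀) t
    have hsub : {ω | ∀ j < t + N, W j ω = u' j} ⊆ π ⁻¹' {v} := fun ω hω => by
      rw [hfib]
      exact fun j hj => (hω j (by omega)).trans (hu't j hj)
    calc P (π ⁻¹' {v} ∩ E (t + N))
        ≤ P (π ⁻¹' {v} \ {ω | ∀ j < t + N, W j ω = u' j}) :=
          measure_mono fun ω hω => ⟨hω.1, fun hω' => hu' (hdet _ _ _ hω' hω.2)⟩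
      _ = p ^ t - p ^ (t + N) := by
          rw [measure_sdiff hsub (measurableSet_cylinder hW _ _).nullMeasurableSet
            (measure_ne_top P _), hfib, measure_cylinder hind hunif,
            measure_cylinder hind hunif]
      _ = (1 - p ^ N) * p ^ t := by
          have hpt : p ^ t ≠ ⊤ :=
            measure_cylinder hind hunif t (fun n => W n ω₀) ▸ measure_ne_top P _
          rw [ENNReal.sub_mul fun _ _ => hpt, one_mul, pow_add, mul_comm]
      _ = (1 - p ^ N) * P (π ⁻¹' {v} ∩ E t) := by
          rw [Set.inter_eq_left.mpr hfibE, hfib, measure_cylinder hind hunif]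
  · have hempty : π ⁻¹' {v} ∩ E (t + N) = ∅ :=
      Set.eq_empty_of_forall_notMem fun ω hω => hv ⟨ω, hω.1, hmono _ _ hω.2⟩
    simp [hempty]

end SeedCylinders

section KilledWalk

variable {d : ℕ} {D : Set (Fin d → ℤ)} {x : Fin d → ℤ} {w : ℕ → ℕ}

lemma kwalk_eq_none_of_le {k m : ℕ} (hkm : k ≤ m) (h : kwalk d D x w k = none) :
    kwalk d D x w m = none := by
  induction m, hkm using Nat.le_induction with
  | base => exact h
  | succ n _ ih => rw [kwalk, ih]

lemma kwalk_congr {w' : ℕ → ℕ} {k : ℕ} (h : ∀ j < k, w j = w' j) :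
    kwalk d D x w k = kwalk d D x w' k := by
  induction k with
  | zero => rfl
  | succ n ih => rw [kwalk, kwalk, ih fun j hj => h j (by omega), h n (by omega)]

lemma kwalk_succ_of_eq_zero (hd : 1 ≤ d) {n : ℕ} {y : Fin d → ℤ}
    (hy : kwalk d D x w n = some y) (hw : w n = 0) :
    kwalk d D x w (n + 1) = some (y + dirVec d 0) := by
  have h2d : 0 ≠ 2 * d := by omega
  by_cases hyD : y ∈ D <;> simp [kwalk, hy, hw, hyD, h2d]

lemma kwalk_succ_eq_none_of_mem {n : ℕ} {y : Fin d → ℤ} (hy : kwalk d D x w n = some y)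
    (hyD : y ∈ D) (hw : w n = 2 * d) : kwalk d D x w (n + 1) = none := by
  simp [kwalk, hy, hyD, hw]

lemma kwalk_add_of_eq_zero (hd : 1 ≤ d) {t m : ℕ} {y : Fin d → ℤ}
    (hy : kwalk d D x w t = some y) (hw : ∀ i < m, w (t + i) = 0) :
    kwalk d D x w (t + m) = some (y + m • dirVec d 0) := by
  induction m with
  | zero => simpa using hy
  | succ m ih =>
    rw [← add_assoc, kwalk_succ_of_eq_zero hd (ih fun i hi => hw i (by omega)) (hw m (by omega)),
      succ_nsmul, add_assoc]

lemma dirVec_zero_ne_zero (hd : 1 ≤ d) : dirVec d 0 ≠ 0 := fun h => by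
  simpa [dirVec, show 0 < d by omega] using congrFun h ⟨0, hd⟩

lemma exists_add_nsmul_dirVec_mem (hd : 1 ≤ d) (hD : Dᶜ.Finite) (y : Fin d → ℤ) :
    ∃ m ≤ hD.toFinset.card, y + m • dirVec d 0 ∈ D := by
  have hinj : Function.Injective fun m : ℕ => y + m • dirVec d 0 := fun m n h => by
    have h' : (m : ℤ) • dirVec d 0 = (n : ℤ) • dirVec d 0 := by
      simpa only [natCast_zsmul] using add_left_cancel h
    exact_mod_cast smul_left_injective ℤ (dirVec_zero_ne_zero hd) h'
  obtain ⟨z, hz, hzD⟩ := Finset.exists_mem_notMem_of_card_lt_card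
    (s := hD.toFinset)
    (t := (Finset.range (hD.toFinset.card + 1)).image fun m => y + m • dirVec d 0)
    (by rw [Finset.card_image_of_injective _ hinj, Finset.card_range]; omega)
  obtain ⟨m, hm, rfl⟩ := Finset.mem_image.mp hz
  exact ⟨m, by simpa [Nat.lt_succ_iff] using hm, by simpa using hzD⟩

lemma exists_extension_kwalk_eq_none (hd : 1 ≤ d) (hD : Dᶜ.Finite)
    (u : ℕ → Fin (2 * d * (2 * d + 1))) (t : ℕ) :
    ∃ u' : ℕ → Fin (2 * d * (2 * d + 1)), (∀ j < t, u' j = u j) ∧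
      kwalk d D x (fun m => (u' m : ℕ)) (t + (hD.toFinset.card + 1)) = none := by
  cases hy : kwalk d D x (fun m => (u m : ℕ)) t with
  | none => exact ⟨u, fun _ _ => rfl, kwalk_eq_none_of_le (by omega) hy⟩
  | some y =>
    obtain ⟨M, hM, hyM⟩ := exists_add_nsmul_dirVec_mem hd hD y
    have hK : 2 * d < 2 * d * (2 * d + 1) := by nlinarith
    set u' : ℕ → Fin (2 * d * (2 * d + 1)) := fun j =>
      if j < t then u j else if j < t + M then ⟨0, by omega⟩ else ⟨2 * d, hK⟩ with hu'
    have hy' : kwalk d D x (fun m => (u' m : ℕ)) t = some y :=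
      (kwalk_congr fun j hj => by simp [hu', hj]).trans hy
    have hyM' := kwalk_add_of_eq_zero (m := M) hd hy' (fun i hi => by simp [hu', hi])
    exact ⟨u', fun j hj => if_pos hj, kwalk_eq_none_of_le (by omega)
      (kwalk_succ_eq_none_of_mem hyM' hyM (by simp [hu']))⟩

lemma killTime_le_tsum (w : ℕ → ℕ) :
    killTime d D x w ≤ ∑' m, if kwalk d D x w m ≠ none then 1 else 0 := by
  classical
  by_cases hex : ∃ n, kwalk d D x w n = none
  · calc killTime d D x w ≤ (Nat.find hex : ℝ≥0∞) :=
          sInf_le ⟨Nat.find hex, rfl, Nat.find_spec hex⟩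
      _ = ∑ m ∈ Finset.range (Nat.find hex), if kwalk d D x w m ≠ none then 1 else 0 := by
          rw [Finset.sum_congr rfl fun m hm => if_pos (Nat.find_min hex (Finset.mem_range.mp hm))]
          simp
      _ ≤ _ := ENNReal.sum_le_tsum _
  · simp only [not_exists] at hex
    simp [hex]

end KilledWalk

/-- If the complement `Dᶜ = ℤ^d \ D` of the set of dissipative sites is finite,
then the expected survival time of the killed random walk (encoded by i.i.d. uniform seeds `W`
on `(Ω, P)`) is finite for every starting point: `Ê_x(T̂) < ∞` for all `x ∈ ℤ^d`. -/
theorem killed_walk_expected_survival_finite_of_compl_finite (d : ℕ) (hd : 1 ≤ d)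
    (D : Set (Fin d → ℤ)) (hD : Dᶜ.Finite) :
    ∀ x : Fin d → ℤ,
      ∀ (Ω : Type) (_ : MeasurableSpace Ω) (P : Measure Ω), IsProbabilityMeasure P →
        ∀ W : ℕ → Ω → Fin (2 * d * (2 * d + 1)),
          (∀ n, Measurable (W n)) →
          iIndepFun W P →
          (∀ n j, P {ω | W n ω = j} = ((2 * d * (2 * d + 1) : ℕ) : ℝ≥0∞)⁻¹) →
          (∫⁻ ω, killTime d D x (fun m => (W m ω : ℕ)) ∂P) < ⊤ := by
  intro x Ω _ P _ W hW hind hunif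
  set N := hD.toFinset.card + 1
  set p : ℝ≥0∞ := ((2 * d * (2 * d + 1) : ℕ) : ℝ≥0∞)⁻¹
  have hp : p ≠ 0 := ENNReal.inv_ne_zero.mpr (ENNReal.natCast_ne_top _)
  set alive : ℕ → Set Ω := fun m => {ω | kwalk d D x (fun n => (W n ω : ℕ)) m ≠ none}
  have hanti : Antitone fun m => P (alive m) := fun a b hab =>
    measure_mono fun ω h h' => h (kwalk_eq_none_of_le hab h')
  have hdecay : ∀ t, P (alive (t + N)) ≤ (1 - p ^ N) * P (alive t) :=
    measure_survive_add_le hW hind hunif (fun u t => kwalk d D x (fun n => (u n : ℕ)) t ≠ none)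
      (fun u u' t h hu => (kwalk_congr fun j hj => congrArg Fin.val (h j hj).symm).trans_ne hu)
      (fun u t h h' => h (kwalk_eq_none_of_le (by omega) h'))
      (fun u t => (exists_extension_kwalk_eq_none hd hD u t).imp fun _ h =>
        ⟨h.1, not_not.mpr h.2⟩)
  calc ∫⁻ ω, killTime d D x (fun m => (W m ω : ℕ)) ∂P ≤ ∑' m, P (alive m) :=
        lintegral_le_tsum_measure fun ω => (killTime_le_tsum _).trans_eq
          (tsum_congr fun m => by simp only [alive, Set.indicator_apply]; rfl)
    _ ≤ ∑' m, (1 - p ^ N) ^ (m / N) :=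
        ENNReal.tsum_le_tsum (ENNReal.le_pow_div_of_le_mul hanti prob_le_one hdecay)
    _ = N * (p ^ N)⁻¹ := by
        rw [ENNReal.tsum_pow_div, ENNReal.sub_sub_cancel ENNReal.one_ne_top (pow_le_one₀ zero_le
          (ENNReal.inv_le_one.mpr (by norm_cast; nlinarith)))]
    _ < ⊤ := ENNReal.mul_lt_top (ENNReal.natCast_lt_top N)
        (ENNReal.inv_lt_top.mpr (pow_ne_zero N hp).bot_lt)
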